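/- arXiv:2102.08474 — 3 statements merged into one kernel-verified Lean document; each statement's English description precedes it below -/
import Mathlib

section
/- For the Gaussian kernel k_σ(u,x) = exp(-‖u-x‖²/(2σ)) on a compact set X ⊆ ℝ^d, and a continuous nonnegative function l, the k-transform l^{k_σ}(x) := sup_{u∈X} l(u)·k_σ(u,x) converges pointwise to l(x) as σ → 0⁺, provided l is continuous at x. -/
open Real Filter

/-! At `u = x` the kernel equals `1`, so the supremum is at least `l x`. Conversely, split `X`
into a small ball around `x`, where `l u * k_σ(u, x) ≤ l u` is close to `l x` by continuity, and
its complement, where the kernel is at most `exp (-δ ^ 2 / (2 * σ))`, which tends to `0` with `σ`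
and kills the bounded factor `l u`. -/

open Set Topology

section GaussianKernel

variable {σ : ℝ}

lemma exp_neg_sq_div_le_one (hσ : 0 ≤ σ) (r : ℝ) : exp (-r ^ 2 / (2 * σ)) ≤ 1 :=
  exp_le_one_iff.2 <| div_nonpos_of_nonpos_of_nonneg (neg_nonpos.2 (sq_nonneg r)) (by positivity)

lemma tendsto_exp_neg_sq_div_nhdsGT_zero {r : ℝ} (hr : r ≠ 0) :
    Tendsto (fun σ : ℝ => exp (-r ^ 2 / (2 * σ))) (𝓝[>] 0) (𝓝 0) := by
  have hcoef : -r ^ 2 / 2 < 0 := by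
    have : 0 < r ^ 2 := by positivity
    linarith
  have hexponent : Tendsto (fun σ : ℝ => -r ^ 2 / 2 * σ⁻¹) (𝓝[>] 0) atBot :=
    tendsto_inv_nhdsGT_zero.const_mul_atTop_of_neg hcoef
  refine tendsto_exp_atBot.comp (hexponent.congr fun σ => ?_)
  field_simp

end GaussianKernel

section KTransform

variable {E : Type*} [SeminormedAddCommGroup E]

/-- The k-transform `l^{k_σ}(x)` for the Gaussian kernel `k_σ(u, x) = exp (-‖u - x‖ ^ 2 / (2σ))`. -/
noncomputable def kTransform (X : Set E) (l : E → ℝ) (σ : ℝ) (x : E) : ℝ :=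
  ⨆ u : X, l u * exp (-‖(u : E) - x‖ ^ 2 / (2 * σ))

variable {X : Set E} {l : E → ℝ} {σ M : ℝ} {x : E}

lemma mul_exp_neg_sq_div_le (hσ : 0 ≤ σ) {u : E} (hu : 0 ≤ l u) :
    l u * exp (-‖u - x‖ ^ 2 / (2 * σ)) ≤ l u :=
  mul_le_of_le_one_right hu (exp_neg_sq_div_le_one hσ _)

lemma le_kTransform (hσ : 0 ≤ σ) (hl : ∀ u ∈ X, 0 ≤ l u) (hM : ∀ u ∈ X, l u ≤ M) (hx : x ∈ X) :
    l x ≤ kTransform X l σ x := by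
  have hbdd : BddAbove (range fun u : X => l u * exp (-‖(u : E) - x‖ ^ 2 / (2 * σ))) := by
    refine ⟨M, forall_mem_range.2 fun u => ?_⟩
    exact (mul_exp_neg_sq_div_le hσ (hl u u.2)).trans (hM u u.2)
  simpa [kTransform] using le_ciSup hbdd ⟨x, hx⟩

lemma kTransform_le_max (hX : X.Nonempty) (hσ : 0 ≤ σ) (hl : ∀ u ∈ X, 0 ≤ l u)
    (hM : ∀ u ∈ X, l u ≤ M) {δ b : ℝ} (hδ : 0 ≤ δ) (hb : ∀ u ∈ X, dist u x < δ → l u ≤ b) :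
    kTransform X l σ x ≤ max b (M * exp (-δ ^ 2 / (2 * σ))) := by
  have := hX.to_subtype
  refine ciSup_le fun u => ?_
  by_cases hux : dist (u : E) x < δ
  · exact le_max_of_le_left ((mul_exp_neg_sq_div_le hσ (hl u u.2)).trans (hb u u.2 hux))
  · have hfar : δ ≤ ‖(u : E) - x‖ := by rw [← dist_eq_norm]; exact not_lt.1 hux
    refine le_max_of_le_right (mul_le_mul (hM u u.2) ?_ (exp_nonneg _) ((hl u u.2).trans (hM u u.2)))
    gcongr

theorem tendsto_kTransform_nhdsGT_zero (hbdd : BddAbove (l '' X)) (hl : ∀ u ∈ X, 0 ≤ l u)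
    (hx : x ∈ X) (hcont : ContinuousWithinAt l X x) :
    Tendsto (fun σ => kTransform X l σ x) (𝓝[>] 0) (𝓝 (l x)) := by
  obtain ⟨M, hM⟩ := hbdd
  have hM : ∀ u ∈ X, l u ≤ M := fun u hu => hM (mem_image_of_mem l hu)
  have hpos : ∀ᶠ σ : ℝ in 𝓝[>] 0, 0 ≤ σ := eventually_mem_nhdsWithin.mono fun _ h => le_of_lt h
  refine tendsto_order.2 ⟨fun a ha => hpos.mono fun σ hσ => ha.trans_le (le_kTransform hσ hl hM hx),
    fun b hb => ?_⟩
  have hmid : l x < (l x + b) / 2 := by linarith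
  obtain ⟨δ, hδ, hnear⟩ := Metric.continuousWithinAt_iff.1 hcont _ (sub_pos.2 hmid)
  have hb' : ∀ u ∈ X, dist u x < δ → l u ≤ (l x + b) / 2 := fun u hu hux => by
    linarith [(abs_lt.1 (hnear hu hux)).2, Real.dist_eq (l u) (l x)]
  have htail : ∀ᶠ σ in 𝓝[>] 0, M * exp (-δ ^ 2 / (2 * σ)) < b := by
    have hb0 : 0 < b := (hl x hx).trans_lt hb
    refine ((tendsto_exp_neg_sq_div_nhdsGT_zero hδ.ne').const_mul M).eventually_lt_const ?_
    rwa [mul_zero]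
  filter_upwards [hpos, htail] with σ hσ hσb
  exact (kTransform_le_max ⟨x, hx⟩ hσ hl hM hδ.le hb').trans_lt (max_lt (by linarith) hσb)

end KTransform

theorem ktransform_tendsto_of_bandwidth_to_zero_general {d : ℕ}
    (X : Set (EuclideanSpace ℝ (Fin d))) (hX : IsCompact X)
    (l : EuclideanSpace ℝ (Fin d) → ℝ)
    (hl_cont : ContinuousOn l X) (hl_nonneg : ∀ u ∈ X, 0 ≤ l u)
    (x : EuclideanSpace ℝ (Fin d)) (hx : x ∈ X) :
    Tendsto (fun σ : ℝ => ⨆ u : X, l u * Real.exp (-‖(u : EuclideanSpace ℝ (Fin d)) - x‖ ^ 2 / (2 * σ)))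
      (nhdsWithin 0 (Set.Ioi 0)) (nhds (l x)) :=
  tendsto_kTransform_nhdsGT_zero (hX.bddAbove_image hl_cont) hl_nonneg hx (hl_cont x hx)

/-- For the Gaussian kernel on a compact set `X ⊆ ℝ^d` and a continuous
nonnegative function `l`, the k-transform converges pointwise to `l x`
as the bandwidth `σ → 0⁺`, at every point `x ∈ X` where `l` is continuous. -/
theorem ktransform_tendsto_of_bandwidth_to_zero {d : ℕ}
    (X : Set (EuclideanSpace ℝ (Fin d))) (hX : IsCompact X) (hXne : X.Nonempty)
    (l : EuclideanSpace ℝ (Fin d) → ℝ)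
    (hl_cont : ContinuousOn l X) (hl_nonneg : ∀ u ∈ X, 0 ≤ l u)
    (x : EuclideanSpace ℝ (Fin d)) (hx : x ∈ X)
    (hl_cont_x : ContinuousAt l x) :
    Tendsto (fun σ : ℝ => ⨆ u : X, l u * Real.exp (-‖(u : EuclideanSpace ℝ (Fin d)) - x‖ ^ 2 / (2 * σ)))
      (nhdsWithin 0 (Set.Ioi 0)) (nhds (l x)) :=
  ktransform_tendsto_of_bandwidth_to_zero_general X hX l hl_cont hl_nonneg x hx
end

section
/- Let k_σ(u,x) = exp(-c(u,x)/σ) with c a nonnegative cost function satisfying c(x,x)=0, and let 0 ≤ l be bounded. Then as σ → ∞, the k-transform sup_u { l(u)·k_σ(u,x) } converges (pointwise in x) to sup_u l(u), recovering worst-case robust optimization. -/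
open Real Filter

/-- As the bandwidth `σ → ∞`, the k-transform with a `c`-exponential kernel
converges to the worst-case loss `sup_u l u` (worst-case robust optimization). -/
theorem ktransform_tendsto_ro {X : Type*} [Nonempty X]
    (c : X → X → ℝ) (hc_nonneg : ∀ u x, 0 ≤ c u x) (hc_diag : ∀ x, c x x = 0)
    (l : X → ℝ) (M : ℝ) (hl_nonneg : ∀ u, 0 ≤ l u) (hl_bdd : ∀ u, l u ≤ M) :
    ∀ x : X,
      Tendsto (fun σ : ℝ => ⨆ u : X, l u * Real.exp (-c u x / σ)) atTop
        (nhds (⨆ u : X, l u)) := by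
  intro x
  have hS : BddAbove (Set.range l) := ⟨M, by rintro _ ⟨u, rfl⟩; exact hl_bdd u⟩
  rw [Metric.tendsto_atTop]
  intro ε hε
  have hlt0 : (⨆ u : X, l u) - ε / 2 < ⨆ u : X, l u := by linarith
  obtain ⟨u0, hu0⟩ := exists_lt_of_lt_ciSup hlt0
  have h1 : Tendsto (fun σ : ℝ => -c u0 x / σ) atTop (nhds 0) :=
    tendsto_const_nhds.div_atTop tendsto_id
  have hg : Tendsto (fun σ : ℝ => l u0 * Real.exp (-c u0 x / σ)) atTop (nhds (l u0)) := by
    have := (tendsto_const_nhds : Tendsto (fun _ : ℝ => l u0) atTop (nhds (l u0))).mul ((Real.continuous_exp.tendsto 0).comp h1)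
    simpa using this
  have hlt : (⨆ u : X, l u) - ε < l u0 := by linarith
  have hev := hg.eventually (eventually_gt_nhds hlt)
  rw [eventually_atTop] at hev
  obtain ⟨N, hN⟩ := hev
  refine ⟨max N 1, fun σ hσ => ?_⟩
  have hσ0 : 0 < σ := lt_of_lt_of_le one_pos (le_trans (le_max_right N 1) hσ)
  have hexp : ∀ u : X, Real.exp (-c u x / σ) ≤ 1 := fun u =>
    Real.exp_le_one_iff.mpr (div_nonpos_of_nonpos_of_nonneg (neg_nonpos.mpr (hc_nonneg u x)) hσ0.le)
  have hbdd2 : BddAbove (Set.range fun u : X => l u * Real.exp (-c u x / σ)) := by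
    refine ⟨M, ?_⟩
    rintro _ ⟨u, rfl⟩
    exact le_trans (mul_le_of_le_one_right (hl_nonneg u) (hexp u)) (hl_bdd u)
  have hle : (⨆ u : X, l u * Real.exp (-c u x / σ)) ≤ ⨆ u : X, l u :=
    ciSup_le fun u => le_trans (mul_le_of_le_one_right (hl_nonneg u) (hexp u)) (le_ciSup hS u)
  have hge : (⨆ u : X, l u) - ε < ⨆ u : X, l u * Real.exp (-c u x / σ) :=
    lt_of_lt_of_le (hN σ (le_trans (le_max_left N 1) hσ)) (le_ciSup hbdd2 u0)
  rw [Real.dist_eq, abs_lt]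
  constructor <;> linarith
end

section
/- If l : ℝ^d → ℝ satisfies 1 ≤ l ≤ B and log l is (1/σ)-Lipschitz (i.e., |log l(u) - log l(v)| ≤ ‖u-v‖/σ), then the k-transform with the Laplacian kernel k_σ(u,x)=exp(-‖u-x‖/σ) leaves l unchanged: sup_u { l(u)·exp(-‖u-x‖/σ) } = l(x) for all x. -/
open Real

/-- If `log l` is `(1/σ)`-Lipschitz then the k-transform with the Laplacian
kernel leaves `l` unchanged. -/
theorem ktransform_eq_self_of_log_lipschitz {d : ℕ}
    (l : EuclideanSpace ℝ (Fin d) → ℝ) (B : ℝ)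
    (hl_one : ∀ u, 1 ≤ l u) (hl_bdd : ∀ u, l u ≤ B)
    (σ : ℝ) (hσ : 0 < σ)
    (hlip : ∀ u v, |Real.log (l u) - Real.log (l v)| ≤ (1 / σ) * ‖u - v‖) :
    ∀ x, (⨆ u, l u * Real.exp (-‖u - x‖ / σ)) = l x := by
  intro x
  have hpos : ∀ u, 0 < l u := fun u => lt_of_lt_of_le one_pos (hl_one u)
  have hub : ∀ u, l u * Real.exp (-‖u - x‖ / σ) ≤ l x := by
    intro u
    have h1 : Real.log (l u) - Real.log (l x) ≤ ‖u - x‖ / σ := by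
      have := le_abs_self (Real.log (l u) - Real.log (l x))
      calc Real.log (l u) - Real.log (l x) ≤ (1 / σ) * ‖u - x‖ :=
            this.trans (hlip u x)
        _ = ‖u - x‖ / σ := by ring
    have h2 : l u * Real.exp (-‖u - x‖ / σ) = Real.exp (Real.log (l u) + (-‖u - x‖ / σ)) := by
      rw [Real.exp_add, Real.exp_log (hpos u)]
    rw [h2]
    calc Real.exp (Real.log (l u) + (-‖u - x‖ / σ)) ≤ Real.exp (Real.log (l x)) := by
          apply Real.exp_le_exp.mpr
          have := neg_div σ ‖u - x‖
          linarith
      _ = l x := Real.exp_log (hpos x)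
  apply le_antisymm
  · exact ciSup_le hub
  · have : l x * Real.exp (-‖x - x‖ / σ) = l x := by
      simp
    calc l x = l x * Real.exp (-‖x - x‖ / σ) := this.symm
      _ ≤ ⨆ u, l u * Real.exp (-‖u - x‖ / σ) :=
          le_ciSup ⟨l x, fun y ⟨u, hu⟩ => hu ▸ hub u⟩ x
end
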